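/- Let k ≥ 4 and let G be a graph with maximum degree at most k containing a path x u v y where u, v have degree 2 in G, x has degree at most k−1, and y has degree at most k−2. If the square of G − u − v is (k+1)-choosable, then the square of G is (k+1)-choosable. -/

import Mathlib

/-
Colour `G² - u - v` from its lists. No vertex outside `G - u - v` has two distinct neighbours in
it, so this is a proper colouring of `G²` away from `u` and `v`. In `G²`, the vertex `u` sees
at most `x`, `y` and the `deg x - 1 ≤ k - 2` other neighbours of `x`, so at most `k` coloured
vertices, and `v` then sees `u`, `x`, `y` and the `deg y - 1 ≤ k - 3` other neighbours of `y`, so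
again at most `k` coloured vertices. Both can therefore be coloured greedily from lists of size
`k + 1`.
-/

open SimpleGraph

/-- The square of a graph: vertices adjacent iff at distance at most 2. -/
def SimpleGraph.square {V : Type*} (G : SimpleGraph V) : SimpleGraph V where
  Adj u v := u ≠ v ∧ (G.Adj u v ∨ ∃ w, G.Adj u w ∧ G.Adj w v)
  symm := ⟨by
    rintro u v ⟨h, h2 | ⟨w, hw1, hw2⟩⟩
    · exact ⟨h.symm, Or.inl h2.symm⟩
    · exact ⟨h.symm, Or.inr ⟨w, hw2.symm, hw1.symm⟩⟩⟩
  loopless := ⟨fun v h => h.1 rfl⟩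

/-- A graph is `k`-choosable if from every assignment of lists of size at least `k`
there is a proper coloring. -/
def SimpleGraph.Choosable {V : Type*} (G : SimpleGraph V) (k : ℕ) : Prop :=
  ∀ L : V → Finset ℕ, (∀ v, k ≤ (L v).card) →
    ∃ c : V → ℕ, (∀ v, c v ∈ L v) ∧ ∀ ⦃u v⦄, G.Adj u v → c u ≠ c v

/-- `G.MadLT x` means the maximum average degree of `G` is less than `x`:
every nonempty subgraph `H` satisfies `2|E(H)|/|V(H)| < x`. -/
def SimpleGraph.MadLT {V : Type*} (G : SimpleGraph V) (x : ℝ) : Prop :=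
  ∀ H : G.Subgraph, H.verts.Nonempty →
    2 * (H.edgeSet.ncard : ℝ) / (H.verts.ncard : ℝ) < x

theorem Set.eq_pair_of_ncard_eq_two {α : Type*} {s : Set α} {a b : α} (hs : s.ncard = 2)
    (ha : a ∈ s) (hb : b ∈ s) (hab : a ≠ b) : s = {a, b} :=
  (Set.eq_of_subset_of_ncard_le (Set.insert_subset ha (Set.singleton_subset_iff.2 hb))
    (by rw [hs, Set.ncard_pair hab]) (Set.finite_of_ncard_pos (by omega))).symm

namespace SimpleGraph

variable {V : Type*} {G : SimpleGraph V}

def IsListColoringOn (G : SimpleGraph V) (L : V → Finset ℕ) (c : V → ℕ) (T : Set V) : Prop :=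
  (∀ a ∈ T, c a ∈ L a) ∧ ∀ a ∈ T, ∀ b ∈ T, G.Adj a b → c a ≠ c b

theorem IsListColoringOn.choosable_witness {L : V → Finset ℕ} {c : V → ℕ} {T : Set V}
    (hc : G.IsListColoringOn L c T) (hT : ∀ a, a ∈ T) :
    (∀ v, c v ∈ L v) ∧ ∀ ⦃a b⦄, G.Adj a b → c a ≠ c b :=
  ⟨fun a => hc.1 a (hT a), fun a b => hc.2 a (hT a) b (hT b)⟩

theorem IsListColoringOn.exists_update_insert [DecidableEq V] {L : V → Finset ℕ} {c : V → ℕ}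
    {T : Set V} (hc : G.IsListColoringOn L c T) {w : V} (hw : w ∉ T) {N : Finset V}
    (hN : ∀ b ∈ T, G.Adj w b → b ∈ N) (hcard : N.card < (L w).card) :
    ∃ col, G.IsListColoringOn L (Function.update c w col) (insert w T) := by
  obtain ⟨col, hcolL, hcolN⟩ :=
    Finset.exists_mem_notMem_of_card_lt_card (Finset.card_image_le.trans_lt hcard)
  have hfresh : ∀ b ∈ T, G.Adj w b → col ≠ c b := fun b hb hwb h =>
    hcolN (h ▸ Finset.mem_image_of_mem c (hN b hb hwb))
  have hne : ∀ b ∈ T, b ≠ w := fun b hb h => hw (h ▸ hb)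
  refine ⟨col, ?_, ?_⟩
  · rintro a (rfl | ha)
    · simpa using hcolL
    · simpa [Function.update_of_ne (hne a ha)] using hc.1 a ha
  · rintro a (rfl | ha) b (rfl | hb) hab
    · exact absurd rfl hab.ne
    · simpa [Function.update_of_ne (hne b hb)] using hfresh b hb hab
    · simpa [Function.update_of_ne (hne a ha)] using (hfresh a ha hab.symm).symm
    · simpa [Function.update_of_ne (hne a ha), Function.update_of_ne (hne b hb)] using
        hc.2 a ha b hb hab

theorem eq_of_adj_of_neighborSet_eq_pair {w p q a b : V} (h : G.neighborSet w = {p, q})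
    (ha : G.Adj w a) (hb : G.Adj w b) (haq : a ≠ q) (hbq : b ≠ q) : a = b := by
  have ha' : a ∈ G.neighborSet w := ha
  have hb' : b ∈ G.neighborSet w := hb
  rw [h] at ha' hb'
  rcases ha' with rfl | rfl
  · rcases hb' with rfl | rfl
    · rfl
    · exact absurd rfl hbq
  · exact absurd rfl haq

theorem square_adj_of_neighborSet_eq_pair {u a b w : V} (h : G.neighborSet u = {a, b})
    (huw : G.square.Adj u w) : w = a ∨ w = b ∨ G.Adj a w ∨ G.Adj b w := by
  obtain ⟨-, huw | ⟨z, huz, hzw⟩⟩ := huw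
  · have : w ∈ G.neighborSet u := huw
    rw [h] at this
    rcases this with rfl | rfl <;> simp
  · have : z ∈ G.neighborSet u := huz
    rw [h] at this
    rcases this with rfl | rfl <;> simp [hzw]

theorem square_induce_adj {S : Set V}
    (hS : ∀ w ∉ S, ∀ a ∈ S, ∀ b ∈ S, G.Adj w a → G.Adj w b → a = b) {a b : S}
    (hab : G.square.Adj a b) : (G.induce S).square.Adj a b := by
  obtain ⟨hne, hadj | ⟨w, haw, hwb⟩⟩ := hab
  · exact ⟨fun h => hne (congrArg Subtype.val h), Or.inl hadj⟩
  · refine ⟨fun h => hne (congrArg Subtype.val h), Or.inr ?_⟩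
    by_cases hw : w ∈ S
    · exact ⟨⟨w, hw⟩, haw, hwb⟩
    · exact absurd (hS w hw a a.2 b b.2 haw.symm hwb) hne

theorem exists_isListColoringOn_of_choosable_induce_square {S : Set V} {m : ℕ}
    (hS : ∀ w ∉ S, ∀ a ∈ S, ∀ b ∈ S, G.Adj w a → G.Adj w b → a = b)
    (hch : (G.induce S).square.Choosable m) (L : V → Finset ℕ) (hL : ∀ v, m ≤ (L v).card) :
    ∃ c, G.square.IsListColoringOn L c S := by
  classical
  obtain ⟨c, hcL, hc⟩ := hch (fun z => L z) (fun z => hL z)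
  refine ⟨fun z => if h : z ∈ S then c ⟨z, h⟩ else 0, fun a ha => ?_, fun a ha b hb hab => ?_⟩
  · simpa [ha] using hcL ⟨a, ha⟩
  · simpa [ha, hb] using hc (square_induce_adj hS (a := ⟨a, ha⟩) (b := ⟨b, hb⟩) hab)

theorem eq_of_adj_of_adj_of_twoThread {x u v y : V} (hNu : G.neighborSet u = {x, v})
    (hNv : G.neighborSet v = {u, y}) :
    ∀ w ∉ {z | z ≠ u ∧ z ≠ v}, ∀ a ∈ {z | z ≠ u ∧ z ≠ v}, ∀ b ∈ {z | z ≠ u ∧ z ≠ v},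
      G.Adj w a → G.Adj w b → a = b := by
  rintro w hw a ⟨hau, hav⟩ b ⟨hbu, hbv⟩ hwa hwb
  obtain rfl | rfl : w = u ∨ w = v := by simpa [or_iff_not_imp_left] using hw
  · exact eq_of_adj_of_neighborSet_eq_pair hNu hwa hwb hav hbv
  · exact eq_of_adj_of_neighborSet_eq_pair (Set.pair_comm u y ▸ hNv) hwa hwb hau hbu

theorem square_adj_twoThread [DecidableEq V] {x u v y b : V} [Fintype (G.neighborSet x)]
    (hNu : G.neighborSet u = {x, v}) (hNv : G.neighborSet v = {u, y}) (hub : G.square.Adj u b) :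
    b = v ∨ b ∈ insert x (insert y ((G.neighborSet x).toFinset.erase u)) := by
  have hbu : b ≠ u := hub.ne.symm
  rcases square_adj_of_neighborSet_eq_pair hNu hub with rfl | rfl | hxb | hvb
  · simp
  · simp
  · simp [hbu, hxb]
  · have : b ∈ G.neighborSet v := hvb
    rw [hNv] at this
    rcases this with rfl | rfl
    · exact absurd rfl hbu
    · simp

theorem card_insert_insert_erase_neighborSet_le [DecidableEq V] {x u : V}
    [Fintype (G.neighborSet x)] (a b : V) (hxu : G.Adj x u) :
    (insert a (insert b ((G.neighborSet x).toFinset.erase u))).card ≤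
      (G.neighborSet x).ncard + 1 := by
  have hu : u ∈ (G.neighborSet x).toFinset := by simpa using hxu
  have herase := Finset.card_erase_add_one hu
  rw [← Set.ncard_eq_toFinset_card'] at herase
  have := Finset.card_insert_le a (insert b ((G.neighborSet x).toFinset.erase u))
  have := Finset.card_insert_le b ((G.neighborSet x).toFinset.erase u)
  omega

end SimpleGraph

theorem twoThread_reducible_general {V : Type*} [Fintype V] (k : ℕ)
    (G : SimpleGraph V)
    (x u v y : V) (hnodup : ([x, u, v, y] : List V).Nodup)
    (hxu : G.Adj x u) (huv : G.Adj u v) (hvy : G.Adj v y)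
    (hu : (G.neighborSet u).ncard = 2) (hv : (G.neighborSet v).ncard = 2)
    (hx : (G.neighborSet x).ncard ≤ k - 1) (hy : (G.neighborSet y).ncard ≤ k - 2)
    (hred : ((G.induce {z | z ≠ u ∧ z ≠ v}).square.Choosable (k + 1))) :
    G.square.Choosable (k + 1) := by
  classical
  obtain ⟨⟨-, hxv, -⟩, ⟨huv', huy⟩, -⟩ :
      (x ≠ u ∧ x ≠ v ∧ x ≠ y) ∧ (u ≠ v ∧ u ≠ y) ∧ v ≠ y := by
    simpa using hnodup
  have hNu : G.neighborSet u = {x, v} := Set.eq_pair_of_ncard_eq_two hu hxu.symm huv hxv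
  have hNv : G.neighborSet v = {u, y} := Set.eq_pair_of_ncard_eq_two hv huv.symm hvy huy
  have hx₀ : 0 < (G.neighborSet x).ncard := (Set.ncard_pos).2 ⟨u, hxu⟩
  have hy₀ : 0 < (G.neighborSet y).ncard := (Set.ncard_pos).2 ⟨v, hvy.symm⟩
  intro L hL
  obtain ⟨c₀, hc₀⟩ := exists_isListColoringOn_of_choosable_induce_square
    (eq_of_adj_of_adj_of_twoThread hNu hNv) hred L hL
  obtain ⟨cu, hcu⟩ := hc₀.exists_update_insert (w := u) (by simp)
    (fun b hb hub => (square_adj_twoThread hNu hNv hub).resolve_left hb.2)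
    (calc _ ≤ (G.neighborSet x).ncard + 1 := card_insert_insert_erase_neighborSet_le x y hxu
      _ < (L u).card := by have := hL u; omega)
  obtain ⟨cv, hcv⟩ := hcu.exists_update_insert (w := v) (by simp [huv'.symm])
    (fun b _ hvb => Finset.mem_insert.2
      (square_adj_twoThread (Set.pair_comm u y ▸ hNv) (Set.pair_comm x v ▸ hNu) hvb))
    (calc _ ≤ _ + 1 := Finset.card_insert_le _ _
      _ ≤ (G.neighborSet y).ncard + 1 + 1 :=
        Nat.add_le_add_right (card_insert_insert_erase_neighborSet_le y x hvy.symm) 1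
      _ < (L v).card := by have := hL v; omega)
  refine ⟨_, hcv.choosable_witness fun a => ?_⟩
  by_cases hau : a = u <;> by_cases hav : a = v <;> simp [hau, hav]

/-- (C3): a 2-thread with endpoints of degree at most `k-1` and `k-2` is
`(k+1)`-reducible. -/
theorem twoThread_reducible {V : Type*} [Fintype V] (k : ℕ) (hk : 4 ≤ k)
    (G : SimpleGraph V) (hΔ : ∀ z, (G.neighborSet z).ncard ≤ k)
    (x u v y : V) (hnodup : ([x, u, v, y] : List V).Nodup)
    (hxu : G.Adj x u) (huv : G.Adj u v) (hvy : G.Adj v y)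
    (hu : (G.neighborSet u).ncard = 2) (hv : (G.neighborSet v).ncard = 2)
    (hx : (G.neighborSet x).ncard ≤ k - 1) (hy : (G.neighborSet y).ncard ≤ k - 2)
    (hred : ((G.induce {z | z ≠ u ∧ z ≠ v}).square.Choosable (k + 1))) :
    G.square.Choosable (k + 1) :=
  twoThread_reducible_general k G x u v y hnodup hxu huv hvy hu hv hx hy hred
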